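/- Let {e₁, …, eₙ} be an orthonormal family in a Hilbert space H, Mᵢ ≥ mᵢ > 0 for each i, and f : [a,b] → H Bochner integrable with Re⟨Mᵢeᵢ − f(t), f(t) − mᵢeᵢ⟩ ≥ 0 for each i ∈ {1,…,n} and a.e. t ∈ [a,b]. Then (∑ᵢ₌₁ⁿ 4mᵢMᵢ/(mᵢ+Mᵢ)²)^{1/2} · ∫ₐᵇ ‖f(t)‖ dt ≤ ‖∫ₐᵇ f(t) dt‖. -/

import Mathlib

/-!
The hypothesis at `t` says that `f t` lies in the closed ball with diameter `[mᵢ eᵢ, Mᵢ eᵢ]`;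
expanding it gives `‖f t‖² + mᵢ Mᵢ ≤ (mᵢ + Mᵢ) Re⟨eᵢ, f t⟩`, and AM-GM turns this into
`cᵢ ‖f t‖ ≤ Re⟨eᵢ, f t⟩` with `cᵢ = 2√(mᵢMᵢ)/(mᵢ+Mᵢ)`. Integrating gives
`cᵢ ∫‖f‖ ≤ Re⟨eᵢ, ∫ f⟩`, and Bessel's inequality sums the squares of these bounds.
-/

open MeasureTheory RCLike

section InnerProductSpace

variable {𝕜 H : Type*} [RCLike 𝕜] [NormedAddCommGroup H] [InnerProductSpace 𝕜 H]

local notation "⟪" x ", " y "⟫" => inner 𝕜 x y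

theorem re_inner_smul_sub_sub_smul (e x : H) (m M : ℝ) :
    re ⟪(M : 𝕜) • e - x, x - (m : 𝕜) • e⟫ = (m + M) * re ⟪e, x⟫ - ‖x‖ ^ 2 - m * M * ‖e‖ ^ 2 := by
  simp only [inner_sub_left, inner_sub_right, inner_smul_left, inner_smul_right, conj_ofReal,
    map_sub, re_ofReal_mul, ← inner_re_symm (𝕜 := 𝕜) e x, inner_self_eq_norm_sq (𝕜 := 𝕜)]
  ring

theorem sqrt_four_mul_mul_div_sq_mul_le {m M u r : ℝ} (hm : 0 < m) (hM : 0 < M)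
    (h : u ^ 2 + m * M ≤ (m + M) * r) :
    Real.sqrt (4 * m * M / (m + M) ^ 2) * u ≤ r := by
  set q := Real.sqrt (4 * m * M / (m + M) ^ 2)
  have hs : 0 < m + M := by positivity
  have hq : q ^ 2 * (m + M) ^ 2 = 4 * m * M := by
    rw [Real.sq_sqrt (by positivity), div_mul_cancel₀ _ (by positivity)]
  -- `(m + M) q = 2 √(m M)`, so this is AM-GM for `u` and `√(m M)`
  have hamgm : (m + M) * (q * u) ≤ u ^ 2 + m * M := by
    nlinarith [sq_nonneg (u - (m + M) * q / 2)]
  nlinarith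

theorem sqrt_four_mul_mul_div_sq_mul_norm_le_re_inner {e x : H} (he : ‖e‖ = 1) {m M : ℝ}
    (hm : 0 < m) (hM : 0 < M) (hx : 0 ≤ re ⟪(M : 𝕜) • e - x, x - (m : 𝕜) • e⟫) :
    Real.sqrt (4 * m * M / (m + M) ^ 2) * ‖x‖ ≤ re ⟪e, x⟫ := by
  rw [re_inner_smul_sub_sub_smul, he] at hx
  exact sqrt_four_mul_mul_div_sq_mul_le hm hM (by linarith)

theorem Orthonormal.sqrt_sum_mul_le_norm {ι : Type*} [Fintype ι] {e : ι → H}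
    (he : Orthonormal 𝕜 e) {x : H} {k : ι → ℝ} {s : ℝ} (hk : ∀ i, 0 ≤ k i) (hs : 0 ≤ s)
    (h : ∀ i, Real.sqrt (k i) * s ≤ re ⟪e i, x⟫) :
    Real.sqrt (∑ i, k i) * s ≤ ‖x‖ := by
  have hterm : ∀ i, k i * s ^ 2 ≤ ‖⟪e i, x⟫‖ ^ 2 := fun i =>
    calc k i * s ^ 2 = (Real.sqrt (k i) * s) ^ 2 := by rw [mul_pow, Real.sq_sqrt (hk i)]
      _ ≤ re ⟪e i, x⟫ ^ 2 := pow_le_pow_left₀ (by positivity) (h i) 2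
      _ ≤ ‖⟪e i, x⟫‖ ^ 2 := by rw [← sq_abs]; gcongr; exact abs_re_le_norm _
  have hsq : (Real.sqrt (∑ i, k i) * s) ^ 2 ≤ ‖x‖ ^ 2 :=
    calc (Real.sqrt (∑ i, k i) * s) ^ 2 = ∑ i, k i * s ^ 2 := by
          rw [mul_pow, Real.sq_sqrt (Finset.sum_nonneg fun i _ => hk i), Finset.sum_mul]
      _ ≤ ∑ i, ‖⟪e i, x⟫‖ ^ 2 := Finset.sum_le_sum fun i _ => hterm i
      _ ≤ ‖x‖ ^ 2 := he.sum_inner_products_le x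
  exact (pow_le_pow_iff_left₀ (by positivity) (norm_nonneg x) two_ne_zero).mp hsq

variable [NormedSpace ℝ H] [CompleteSpace H]

theorem mul_integral_norm_le_re_inner_integral {α : Type*} [MeasurableSpace α] {μ : Measure α}
    {f : α → H} (hf : Integrable f μ) (e : H) {c : ℝ}
    (h : ∀ᵐ t ∂μ, c * ‖f t‖ ≤ re ⟪e, f t⟫) :
    c * ∫ t, ‖f t‖ ∂μ ≤ re ⟪e, ∫ t, f t ∂μ⟫ := by
  rw [← integral_const_mul, ← integral_inner hf, ← integral_re (hf.const_inner e)]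
  exact integral_mono_ae (hf.norm.const_mul c) (hf.const_inner e).re h

end InnerProductSpace

theorem stmt_10_general {𝕜 H : Type*} [RCLike 𝕜] [NormedAddCommGroup H] [InnerProductSpace 𝕜 H]
    [NormedSpace ℝ H] [CompleteSpace H]
    {a b : ℝ} {f : ℝ → H} (hf : IntegrableOn f (Set.Icc a b))
    {n : ℕ} {e : Fin n → H} (he : Orthonormal 𝕜 e)
    {m M : Fin n → ℝ} (hm : ∀ i, 0 < m i) (hmM : ∀ i, m i ≤ M i)
    (h : ∀ i, ∀ᵐ t ∂(volume.restrict (Set.Icc a b)),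
      0 ≤ RCLike.re (inner 𝕜 ((M i : 𝕜) • e i - f t) (f t - (m i : 𝕜) • e i) : 𝕜)) :
    Real.sqrt (∑ i, 4 * m i * M i / (m i + M i) ^ 2) * ∫ t in Set.Icc a b, ‖f t‖ ≤
      ‖∫ t in Set.Icc a b, f t‖ := by
  have hM : ∀ i, 0 < M i := fun i => (hm i).trans_le (hmM i)
  refine he.sqrt_sum_mul_le_norm (fun i => by have := hm i; have := hM i; positivity)
    (integral_nonneg fun t => norm_nonneg _) fun i => ?_
  refine mul_integral_norm_le_re_inner_integral hf (e i) ?_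
  filter_upwards [h i] with t ht
  exact sqrt_four_mul_mul_div_sq_mul_norm_le_re_inner (he.1 i) (hm i) (hM i) ht

theorem stmt_10 {𝕜 H : Type*} [RCLike 𝕜] [NormedAddCommGroup H] [InnerProductSpace 𝕜 H]
    [NormedSpace ℝ H] [IsScalarTower ℝ 𝕜 H] [CompleteSpace H]
    {a b : ℝ} {f : ℝ → H} (hf : IntegrableOn f (Set.Icc a b))
    {n : ℕ} {e : Fin n → H} (he : Orthonormal 𝕜 e)
    {m M : Fin n → ℝ} (hm : ∀ i, 0 < m i) (hmM : ∀ i, m i ≤ M i)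
    (h : ∀ i, ∀ᵐ t ∂(volume.restrict (Set.Icc a b)),
      0 ≤ RCLike.re (inner 𝕜 ((M i : 𝕜) • e i - f t) (f t - (m i : 𝕜) • e i) : 𝕜)) :
    Real.sqrt (∑ i, 4 * m i * M i / (m i + M i) ^ 2) * ∫ t in Set.Icc a b, ‖f t‖ ≤
      ‖∫ t in Set.Icc a b, f t‖ :=
  stmt_10_general hf he hm hmM h
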